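/- The matrix D^s defined by (D^s)_{j,l} = -Σ_{k=-N/2}^{N/2} (1/(N c_k)) |kμ|^s exp(-i k μ (x_j - x_l)) is negative semidefinite: for every vector U ∈ R^N, U^T D^s U ≤ 0. -/

import Mathlib

/-!
Writing `v_k = (exp(-i k μ x_j))_j` for the Fourier modes sampled on the grid, the entries
`exp(-i k μ (x_j - x_l)) = v_k j * conj (v_k l)` show that `-Dˢ = ∑_k w_k v_k v_kᴴ` with weights
`w_k = |kμ|ˢ / (N c_k) ≥ 0`. A nonnegative combination of rank-one Gram matrices is positive
semidefinite, so `Uᵀ (-Dˢ) U = ∑_k w_k |v_kᴴ U|² ≥ 0`.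
-/

open Complex

/-- The Fourier pseudo-spectral fractional differentiation matrix
`(Dˢ)_{j,l} = -Σ_{k=-N/2}^{N/2} (1/(N c_k)) |kμ|ˢ exp(-i k μ (x_j - x_l))`,
with `x_j = x_a + j h`, `h = (x_b - x_a)/N`, `μ = 2π/(x_b - x_a)`,
`c_k = 1` for `|k| < N/2` and `c_k = 2` for `k = ±N/2`. -/
noncomputable def spectralFracMatrix (N : ℕ) (xa xb s : ℝ) :
    Matrix (Fin N) (Fin N) ℂ :=
  fun j l =>
    -∑ k ∈ Finset.Icc (-(N : ℤ) / 2) ((N : ℤ) / 2),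
      (1 / ((N : ℂ) * (if 2 * k.natAbs = N then (2 : ℂ) else 1))) *
        ((|(k : ℝ) * (2 * Real.pi / (xb - xa))| ^ s : ℝ) : ℂ) *
        Complex.exp (-Complex.I * (k : ℂ) * ((2 * Real.pi / (xb - xa) : ℝ) : ℂ) *
          (((xa + (j : ℝ) * ((xb - xa) / N)) - (xa + (l : ℝ) * ((xb - xa) / N)) : ℝ) : ℂ))

open Matrix ComplexOrder

theorem Matrix.posSemidef_sum_smul_vecMulVec_self_star {ι n : Type*} [Fintype n]
    (s : Finset ι) (w : ι → ℝ) (hw : ∀ k ∈ s, 0 ≤ w k) (e : ι → n → ℂ) :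
    (∑ k ∈ s, w k • vecMulVec (e k) (star (e k))).PosSemidef :=
  posSemidef_sum s fun k hk => (posSemidef_vecMulVec_self_star (e k)).smul (hw k hk)

noncomputable def spectralFracWeight (N : ℕ) (xa xb s : ℝ) (k : ℤ) : ℝ :=
  1 / ((N : ℝ) * (if 2 * k.natAbs = N then 2 else 1)) * |(k : ℝ) * (2 * Real.pi / (xb - xa))| ^ s

theorem spectralFracWeight_nonneg (N : ℕ) (xa xb s : ℝ) (k : ℤ) :
    0 ≤ spectralFracWeight N xa xb s k := by
  unfold spectralFracWeight
  split_ifs <;> positivity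

noncomputable def fourierModeVec (N : ℕ) (xa xb : ℝ) (k : ℤ) : Fin N → ℂ :=
  fun j => exp (-I * ((k * (2 * Real.pi / (xb - xa)) * (xa + j * ((xb - xa) / N)) : ℝ) : ℂ))

theorem neg_spectralFracMatrix_eq_sum (N : ℕ) (xa xb s : ℝ) :
    -spectralFracMatrix N xa xb s =
      ∑ k ∈ Finset.Icc (-(N : ℤ) / 2) ((N : ℤ) / 2), spectralFracWeight N xa xb s k •
        vecMulVec (fourierModeVec N xa xb k) (star (fourierModeVec N xa xb k)) := by
  ext j l
  simp only [spectralFracMatrix, Matrix.neg_apply, neg_neg, Matrix.sum_apply, Matrix.smul_apply,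
    vecMulVec_apply, Pi.star_apply, fourierModeVec, spectralFracWeight, Complex.star_def,
    ← Complex.exp_conj, ← exp_add, Complex.real_smul]
  refine Finset.sum_congr rfl fun k _ => ?_
  congr 1
  · split_ifs <;> push_cast <;> rfl
  · congr 1
    simp only [map_neg, map_mul, conj_ofReal, conj_I]
    push_cast
    ring

theorem neg_spectralFracMatrix_posSemidef (N : ℕ) (xa xb s : ℝ) :
    (-spectralFracMatrix N xa xb s).PosSemidef := by
  rw [neg_spectralFracMatrix_eq_sum]
  exact posSemidef_sum_smul_vecMulVec_self_star _ _
    (fun k _ => spectralFracWeight_nonneg N xa xb s k) _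

theorem spectralFracMatrix_negSemidef_general (N : ℕ) (xa xb s : ℝ) :
    ∀ U : Fin N → ℝ,
      (dotProduct (fun j => (U j : ℂ))
        ((spectralFracMatrix N xa xb s).mulVec fun j => (U j : ℂ))).re ≤ 0 := by
  intro U
  have hU : star (fun j => (U j : ℂ)) = fun j => (U j : ℂ) := funext fun j => conj_ofReal _
  have := (neg_spectralFracMatrix_posSemidef N xa xb s).dotProduct_mulVec_nonneg fun j => (U j : ℂ)
  simpa [hU, neg_mulVec] using (Complex.le_def.mp this).1

/-- The pseudo-spectral differentiation matrix `Dˢ` is negative semidefinite: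
`Uᵀ Dˢ U ≤ 0` for every real vector `U`. -/
theorem spectralFracMatrix_negSemidef (N : ℕ) (hN : 0 < N) (hNeven : Even N)
    (xa xb s : ℝ) (hab : xa < xb) (hs : 0 < s) :
    ∀ U : Fin N → ℝ,
      (dotProduct (fun j => (U j : ℂ))
        ((spectralFracMatrix N xa xb s).mulVec fun j => (U j : ℂ))).re ≤ 0 :=
  spectralFracMatrix_negSemidef_general N xa xb s
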